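/- arXiv:2105.05377 — 2 statements merged into one kernel-verified Lean document; each statement's English description precedes it below -/
import Mathlib

section
/- Let D1 and D2 be probability mass functions on the natural numbers, and let c1, c2 be real constants with 0 < c1 < ∞ and 0 < c2 < ∞. If the expectation ∑_{n=0}^∞ D1(n)·n diverges to infinity and D2(n) ≤ c1·exp(−c2·n) for every natural number n, then the Kullback–Leibler divergence KL(D1 || D2) = ∑_{n : D1(n) > 0} D1(n)·log(D1(n)/D2(n)) is infinite (as a value in the extended reals). -/
/-- Let `D1` and `D2` be probability mass functions on `ℕ` and let
`c1, c2` be positive real constants. If `∑ n, D1 n * n` diverges to infinity and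
`D2 n ≤ c1 * exp (-c2 * n)` for all `n`, then the Kullback–Leibler divergence
`KL(D1 ‖ D2) = ∑_{n : D1 n > 0} D1 n * log (D1 n / D2 n)` is infinite:
either some `n` has `D1 n > 0` and `D2 n = 0` (in which case `KL = +∞` by convention),
or the partial sums of the series tend to `+∞`. -/
theorem stmt_0 (D1 D2 : ℕ → ℝ) (c1 c2 : ℝ)
    (hD1nonneg : ∀ n, 0 ≤ D1 n) (hD2nonneg : ∀ n, 0 ≤ D2 n)
    (hD1sum : HasSum D1 1) (hD2sum : HasSum D2 1)
    (hc1 : 0 < c1) (hc2 : 0 < c2)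
    (hmean : Filter.Tendsto (fun N => ∑ n ∈ Finset.range N, D1 n * (n : ℝ))
      Filter.atTop Filter.atTop)
    (hbound : ∀ n : ℕ, D2 n ≤ c1 * Real.exp (-c2 * n)) :
    (∃ n, 0 < D1 n ∧ D2 n = 0) ∨
      Filter.Tendsto
        (fun N => ∑ n ∈ Finset.range N,
          (if 0 < D1 n then D1 n * Real.log (D1 n / D2 n) else 0))
        Filter.atTop Filter.atTop := by
  by_cases hzero : ∃ n, 0 < D1 n ∧ D2 n = 0
  · exact Or.inl hzero
  right
  push_neg at hzero
  have hD2pos : ∀ n, 0 < D1 n → 0 < D2 n := fun n h =>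
    lt_of_le_of_ne (hD2nonneg n) (Ne.symm (hzero n h))
  set R : ℕ → ℝ := fun n => c1 * Real.exp (-(c2/2) * n) with hR
  have hRpos : ∀ n, 0 < R n := fun n => mul_pos hc1 (Real.exp_pos _)
  -- pointwise bound
  have hpt : ∀ n : ℕ, D1 n - R n + (c2/2) * (D1 n * n)
      ≤ (if 0 < D1 n then D1 n * Real.log (D1 n / D2 n) else 0) := by
    intro n
    by_cases h : 0 < D1 n
    · simp only [if_pos h]
      have hD2 : 0 < D2 n := hD2pos n h
      -- D1 n * log (D1 n / R n) ≥ D1 n - R n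
      have h2 : D1 n - R n ≤ D1 n * Real.log (D1 n / R n) := by
        have h1 : Real.log (R n / D1 n) ≤ R n / D1 n - 1 :=
          Real.log_le_sub_one_of_pos (div_pos (hRpos n) h)
        have hlog : Real.log (D1 n / R n) = - Real.log (R n / D1 n) := by
          rw [← Real.log_inv, inv_div]
        rw [hlog]
        have : D1 n * (R n / D1 n - 1) ≤ D1 n * Real.log (R n / D1 n)⁻¹ → True := fun _ => trivial
        nlinarith [mul_le_mul_of_nonneg_left h1 (le_of_lt h),
          mul_div_cancel₀ (R n) h.ne']
      have hfact : c1 * Real.exp (-c2 * n) = R n * Real.exp (-(c2/2) * n) := by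
        rw [hR]
        simp only [mul_assoc, ← Real.exp_add]
        ring_nf
      have hkey : D1 n / (c1 * Real.exp (-c2 * n)) = (D1 n / R n) * Real.exp ((c2/2) * n) := by
        rw [hfact, div_mul_eq_div_div, div_eq_mul_inv (D1 n / R n), ← Real.exp_neg]; ring_nf
      have hmono : Real.log (D1 n / (c1 * Real.exp (-c2 * n))) ≤ Real.log (D1 n / D2 n) := by
        apply Real.log_le_log (by positivity)
        gcongr
        exact hbound n
      have hlogeq : Real.log (D1 n / (c1 * Real.exp (-c2 * n)))
          = Real.log (D1 n / R n) + (c2/2) * n := by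
        rw [hkey, Real.log_mul (div_ne_zero h.ne' (hRpos n).ne') (Real.exp_ne_zero _),
          Real.log_exp]
      have := mul_le_mul_of_nonneg_left hmono (le_of_lt h)
      rw [hlogeq, mul_add] at this
      nlinarith
    · have h0 : D1 n = 0 := le_antisymm (not_lt.mp h) (hD1nonneg n)
      simp [if_neg h, h0, le_of_lt (hRpos n)]
  -- sum of lower bounds tends to atTop
  have hT1 : Filter.Tendsto (fun N => ∑ n ∈ Finset.range N, D1 n)
      Filter.atTop (nhds 1) := hD1sum.tendsto_sum_nat
  have hRsum : HasSum R (c1 * (1 - Real.exp (-(c2/2)))⁻¹) := by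
    have hr0 : (0:ℝ) ≤ Real.exp (-(c2/2)) := le_of_lt (Real.exp_pos _)
    have hr1 : Real.exp (-(c2/2)) < 1 := Real.exp_lt_one_iff.mpr (by linarith)
    have hgeom := (hasSum_geometric_of_lt_one hr0 hr1).mul_left c1
    have heq : R = fun n => c1 * (Real.exp (-(c2/2)))^n := by
      funext n
      rw [hR, ← Real.exp_nat_mul]
      ring_nf
    rw [heq]
    exact hgeom
  have hT2 : Filter.Tendsto (fun N => ∑ n ∈ Finset.range N, R n)
      Filter.atTop (nhds (c1 * (1 - Real.exp (-(c2/2)))⁻¹)) := hRsum.tendsto_sum_nat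
  have hT3 : Filter.Tendsto (fun N => (c2/2) * ∑ n ∈ Finset.range N, D1 n * (n:ℝ))
      Filter.atTop Filter.atTop := hmean.const_mul_atTop (half_pos hc2)
  have hTlow : Filter.Tendsto
      (fun N => ∑ n ∈ Finset.range N, (D1 n - R n + (c2/2) * (D1 n * n)))
      Filter.atTop Filter.atTop := by
    have := ((hT1.sub hT2).add_atTop hT3)
    apply this.congr
    intro N
    rw [Finset.sum_add_distrib, Finset.sum_sub_distrib, Finset.mul_sum]
  exact Filter.tendsto_atTop_mono
    (fun N => Finset.sum_le_sum fun n _ => hpt n) hTlow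
end

section
/- Let D be a probability mass function on the natural numbers, and let c1, c2 be real constants with 0 < c1 < ∞ and 0 < c2 < ∞. Define the set C = { n ∈ ℕ : D(n) > c1·exp(−n·c2) }. If ∑_{n=0}^∞ D(n)·n diverges to infinity, then ∑_{n ∈ C} D(n)·log( D(n) / (c1·exp(−n·c2)) ) diverges to infinity. -/
private lemma key_xlog (x r : ℝ) (hx : 0 ≤ x) (hr : 0 < r) :
    x - r ≤ x * Real.log (x / r) := by
  rcases eq_or_lt_of_le hx with h | h
  · simp [← h]; linarith
  · have h1 : Real.log (r / x) ≤ r / x - 1 := Real.log_le_sub_one_of_pos (by positivity)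
    have h2 : Real.log (r / x) = -Real.log (x / r) := by
      rw [← Real.log_inv]; congr 1; field_simp
    rw [h2] at h1
    have h3 : 1 - r / x ≤ Real.log (x / r) := by linarith
    have h4 := mul_le_mul_of_nonneg_left h3 h.le
    have h5 : x * (r / x) = r := mul_div_cancel₀ r h.ne'
    nlinarith

/-- Let `D` be a probability mass function on `ℕ` and let `c1, c2` be
positive real constants. Let `C = {n | D n > c1 * exp (-n * c2)}`. If `∑ n, D n * n`
diverges to infinity, then `∑_{n ∈ C} D n * log (D n / (c1 * exp (-n * c2)))`
diverges to infinity (every summand over `C` is positive, and the sum over `C` of the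
first `N` naturals tends to `+∞`). -/
theorem stmt_1 (D : ℕ → ℝ) (c1 c2 : ℝ)
    (hDnonneg : ∀ n, 0 ≤ D n) (hDsum : HasSum D 1)
    (hc1 : 0 < c1) (hc2 : 0 < c2)
    (hmean : Filter.Tendsto (fun N => ∑ n ∈ Finset.range N, D n * (n : ℝ))
      Filter.atTop Filter.atTop) :
    Filter.Tendsto
      (fun N => ∑ n ∈ Finset.range N,
        (if c1 * Real.exp (-(n : ℝ) * c2) < D n then
          D n * Real.log (D n / (c1 * Real.exp (-(n : ℝ) * c2))) else 0))
      Filter.atTop Filter.atTop := by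
  set t : ℝ := c2 / 2 with ht
  have ht0 : 0 < t := by positivity
  -- termwise lower bound
  have hterm : ∀ n : ℕ,
      t * (D n * n) - Real.exp (-t * n) - |Real.log c1| * D n ≤
      (if c1 * Real.exp (-(n : ℝ) * c2) < D n then
        D n * Real.log (D n / (c1 * Real.exp (-(n : ℝ) * c2))) else 0) := by
    intro n
    set q : ℝ := c1 * Real.exp (-(n : ℝ) * c2) with hq
    have hq0 : 0 < q := by positivity
    have hr0 : 0 < Real.exp (-t * n) := Real.exp_pos _
    have hlog : 0 < D n →
        t * (D n * n) - Real.exp (-t * n) - |Real.log c1| * D n ≤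
        D n * Real.log (D n / q) := by
      intro hD
      have h1 := key_xlog (D n) (Real.exp (-t * n)) hD.le hr0
      have h2 : Real.log (D n / Real.exp (-t * n)) = Real.log (D n) + t * n := by
        rw [Real.log_div hD.ne' hr0.ne', Real.log_exp]; ring
      rw [h2] at h1
      have h3 : Real.log (D n / q) = Real.log (D n) - Real.log c1 + n * c2 := by
        rw [Real.log_div hD.ne' hq0.ne', hq, Real.log_mul hc1.ne' (Real.exp_pos _).ne',
          Real.log_exp]; ring
      rw [h3]
      have h4 : -|Real.log c1| ≤ -Real.log c1 := neg_le_neg (le_abs_self _)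
      have h4' := mul_le_mul_of_nonneg_left h4 hD.le
      have h5 : D n * ((n : ℝ) * c2) = 2 * (D n * (t * n)) := by rw [ht]; ring
      nlinarith [hD.le, mul_nonneg (mul_nonneg ht0.le (Nat.cast_nonneg n : (0:ℝ) ≤ n)) hD.le]
    split_ifs with hlt
    · exact hlog (hq0.trans hlt)
    · rcases eq_or_lt_of_le (hDnonneg n) with hD | hD
      · simp only [← hD, mul_zero, zero_mul, Nat.cast_eq_zero]
        have := (Real.exp_pos (-t * (n:ℝ))).le
        nlinarith
      · have h := hlog hD
        have hle : D n / q ≤ 1 := (div_le_one hq0).mpr (not_lt.mp hlt)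
        have hlognp : Real.log (D n / q) ≤ 0 := Real.log_nonpos (by positivity) hle
        have := mul_nonpos_of_nonneg_of_nonpos (hDnonneg n) hlognp
        linarith
  -- geometric sum bound
  have hrlt : Real.exp (-t) < 1 := by
    rw [Real.exp_lt_one_iff]; linarith
  have hgeom : ∀ N, ∑ n ∈ Finset.range N, Real.exp (-t * n) ≤ (1 - Real.exp (-t))⁻¹ := by
    intro N
    have h1 : ∀ n : ℕ, Real.exp (-t * n) = (Real.exp (-t)) ^ n := by
      intro n; rw [← Real.exp_nat_mul]; ring_nf
    calc ∑ n ∈ Finset.range N, Real.exp (-t * n)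
        = ∑ n ∈ Finset.range N, (Real.exp (-t)) ^ n := by
          exact Finset.sum_congr rfl fun n _ => h1 n
      _ ≤ ∑' n : ℕ, (Real.exp (-t)) ^ n :=
          Summable.sum_le_tsum _ (fun i _ => by positivity)
            (summable_geometric_of_lt_one (Real.exp_pos _).le hrlt)
      _ = (1 - Real.exp (-t))⁻¹ := tsum_geometric_of_lt_one (Real.exp_pos _).le hrlt
  -- partial sums of D are ≤ 1
  have hDle : ∀ N, ∑ n ∈ Finset.range N, D n ≤ 1 :=
    fun N => sum_le_hasSum (Finset.range N) (fun i _ => hDnonneg i) hDsum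
  -- lower bound on partial sums
  have hsum : ∀ N,
      t * (∑ n ∈ Finset.range N, D n * n) + (-(1 - Real.exp (-t))⁻¹ - |Real.log c1|) ≤
      ∑ n ∈ Finset.range N,
        (if c1 * Real.exp (-(n : ℝ) * c2) < D n then
          D n * Real.log (D n / (c1 * Real.exp (-(n : ℝ) * c2))) else 0) := by
    intro N
    have h1 : ∑ n ∈ Finset.range N,
        (t * (D n * n) - Real.exp (-t * n) - |Real.log c1| * D n) ≤
        ∑ n ∈ Finset.range N,
        (if c1 * Real.exp (-(n : ℝ) * c2) < D n then
          D n * Real.log (D n / (c1 * Real.exp (-(n : ℝ) * c2))) else 0) :=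
      Finset.sum_le_sum fun n _ => hterm n
    have h2 : ∑ n ∈ Finset.range N,
        (t * (D n * n) - Real.exp (-t * n) - |Real.log c1| * D n) =
        t * (∑ n ∈ Finset.range N, D n * n) - (∑ n ∈ Finset.range N, Real.exp (-t * n))
          - |Real.log c1| * (∑ n ∈ Finset.range N, D n) := by
      rw [Finset.mul_sum, Finset.mul_sum, ← Finset.sum_sub_distrib, ← Finset.sum_sub_distrib]
    have h3 := hgeom N
    have h4 := hDle N
    have h5 : |Real.log c1| * (∑ n ∈ Finset.range N, D n) ≤ |Real.log c1| := by
      calc |Real.log c1| * (∑ n ∈ Finset.range N, D n) ≤ |Real.log c1| * 1 :=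
            mul_le_mul_of_nonneg_left h4 (abs_nonneg _)
        _ = |Real.log c1| := mul_one _
    linarith [h1, h2.ge, h2.le]
  -- conclude
  have hmain : Filter.Tendsto
      (fun N => t * (∑ n ∈ Finset.range N, D n * n) + (-(1 - Real.exp (-t))⁻¹ - |Real.log c1|))
      Filter.atTop Filter.atTop := by
    apply Filter.tendsto_atTop_add_const_right
    exact hmean.const_mul_atTop ht0
  exact Filter.tendsto_atTop_mono hsum hmain
end
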